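/- arXiv:1411.0903 — 2 statements merged into one kernel-verified Lean document; each statement's English description precedes it below -/
import Mathlib

section
/- The convolution of ρ₁ with itself, ρ₂(x) = ∫_{-∞}^{∞} ρ₁(u) ρ₁(x-u) du with ρ₁(x) = (π/2) sech²(πx), satisfies ρ₂(x) = (π/sinh²(πx)) · (πx coth(πx) - 1) for x ≠ 0. -/
/-!
After the substitution `t = π u` the integrand becomes `sech² t · sech² (a - t)`
with `a = π x`. Writing `T = tanh t` and `S = tanh (a - t)`, the addition formulas give
`sinh a = (T + S) cosh t cosh (a - t)` and `cosh a = (1 + T S) cosh t cosh (a - t)`; with these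
one checks that
`(tanh (a - t) - tanh t + 2 coth a · log (cosh t / cosh (a - t))) / sinh² a`
is a primitive. As `t → ±∞` we have `tanh t → ±1`, and
`cosh t / cosh (a - t) = cosh a - sinh a tanh (a - t) → e^{±a}`,
so the integral is the difference of the two limits, `4 (a coth a - 1) / sinh² a`.
-/

open Real Filter Topology MeasureTheory

section

variable {G : Type*} [AddCommGroup G] [PartialOrder G] [IsOrderedAddMonoid G]

theorem tendsto_const_sub_atTop_atBot (a : G) : Tendsto (fun t => a - t) atTop atBot := by
  simpa only [sub_eq_add_neg] using tendsto_atBot_add_const_left _ a tendsto_neg_atTop_atBot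

theorem tendsto_const_sub_atBot_atTop (a : G) : Tendsto (fun t => a - t) atBot atTop := by
  simpa only [sub_eq_add_neg] using tendsto_atTop_add_const_left _ a tendsto_neg_atBot_atTop

end

theorem integrable_of_hasDerivAt_of_nonneg {g g' : ℝ → ℝ} {m n : ℝ}
    (hderiv : ∀ x, HasDerivAt g (g' x) x) (hg' : ∀ x, 0 ≤ g' x)
    (hbot : Tendsto g atBot (𝓝 m)) (htop : Tendsto g atTop (𝓝 n)) : Integrable g' := by
  have hcont : Continuous g := continuous_iff_continuousAt.2 fun x => (hderiv x).continuousAt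
  have hint (a b : ℝ) : IntervalIntegrable g' volume a b :=
    intervalIntegral.intervalIntegrable_deriv_of_nonneg hcont.continuousOn (fun x _ => hderiv x)
      fun x _ => hg' x
  refine (aecover_Ioc (b := fun r => r) tendsto_neg_atTop_atBot tendsto_id
    ).integrable_of_integral_tendsto_of_nonneg_ae (n - m) (fun r => (hint (-r) r).1)
      (ae_of_all _ hg') ?_
  refine (htop.sub (hbot.comp tendsto_neg_atTop_atBot)).congr' ?_
  filter_upwards [eventually_ge_atTop 0] with r hr
  rw [← intervalIntegral.integral_of_le (neg_le_self hr),
    intervalIntegral.integral_eq_sub_of_hasDerivAt (fun x _ => hderiv x) (hint _ _)]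
  rfl

namespace Real

theorem tanh_eq_one_sub_two_div (x : ℝ) : tanh x = 1 - 2 / (exp (2 * x) + 1) := by
  have hx : exp (2 * x) = exp x * exp x := by rw [← exp_add, two_mul]
  rw [tanh_eq_sinh_div_cosh, sinh_eq, cosh_eq, hx, exp_neg]
  field_simp
  ring

theorem tendsto_tanh_atTop : Tendsto tanh atTop (𝓝 1) := by
  have h : Tendsto (fun x : ℝ => exp (2 * x) + 1) atTop atTop :=
    tendsto_atTop_add_const_right _ 1 (tendsto_exp_atTop.comp (tendsto_id.const_mul_atTop two_pos))
  simpa [← tanh_eq_one_sub_two_div] using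
    (tendsto_const_nhds (x := (1 : ℝ))).sub (h.const_div_atTop 2)

theorem tendsto_tanh_atBot : Tendsto tanh atBot (𝓝 (-1)) := by
  simpa [Function.comp_def, tanh_neg] using (tendsto_tanh_atTop.comp tendsto_neg_atBot_atTop).neg

theorem hasDerivAt_tanh (x : ℝ) : HasDerivAt tanh (1 / cosh x ^ 2) x := by
  have h := (hasDerivAt_sinh x).div (hasDerivAt_cosh x) (cosh_pos x).ne'
  have htanh : sinh / cosh = tanh := funext fun t => (tanh_eq_sinh_div_cosh t).symm
  rwa [← sq, ← sq, cosh_sq_sub_sinh_sq, htanh] at h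

theorem one_div_cosh_sq_eq_one_sub_tanh_sq (x : ℝ) : 1 / cosh x ^ 2 = 1 - tanh x ^ 2 := by
  rw [tanh_eq_sinh_div_cosh, div_pow, cosh_sq']
  field_simp
  ring

theorem hasDerivAt_log_cosh (x : ℝ) : HasDerivAt (fun t => log (cosh t)) (tanh x) x := by
  simpa [tanh_eq_sinh_div_cosh] using (hasDerivAt_cosh x).log (cosh_pos x).ne'

theorem tanh_add_tanh_sub (a t : ℝ) :
    tanh t + tanh (a - t) = sinh a / (cosh t * cosh (a - t)) := by
  have h := sinh_add t (a - t)
  rw [add_sub_cancel] at h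
  rw [tanh_eq_sinh_div_cosh, tanh_eq_sinh_div_cosh, h]
  field_simp [(cosh_pos t).ne', (cosh_pos (a - t)).ne']

theorem one_add_tanh_mul_tanh_sub (a t : ℝ) :
    1 + tanh t * tanh (a - t) = cosh a / (cosh t * cosh (a - t)) := by
  have h := cosh_add t (a - t)
  rw [add_sub_cancel] at h
  rw [tanh_eq_sinh_div_cosh, tanh_eq_sinh_div_cosh, h]
  field_simp [(cosh_pos t).ne', (cosh_pos (a - t)).ne']

theorem log_cosh_sub_log_cosh_sub (a t : ℝ) :
    log (cosh t) - log (cosh (a - t)) = log (cosh a - sinh a * tanh (a - t)) := by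
  have h := cosh_sub a (a - t)
  rw [sub_sub_cancel] at h
  rw [← log_div (cosh_pos t).ne' (cosh_pos (a - t)).ne', h, tanh_eq_sinh_div_cosh]
  field_simp [(cosh_pos (a - t)).ne']

noncomputable def sechSqConvPrimitive (a t : ℝ) : ℝ :=
  (tanh (a - t) - tanh t + 2 * (cosh a / sinh a) * (log (cosh t) - log (cosh (a - t)))) /
    sinh a ^ 2

theorem hasDerivAt_sechSqConvPrimitive {a : ℝ} (ha : a ≠ 0) (t : ℝ) :
    HasDerivAt (sechSqConvPrimitive a) ((1 / cosh t) ^ 2 * (1 / cosh (a - t)) ^ 2) t := by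
  have hsub : HasDerivAt (fun s => a - s) (-1) t := by
    simpa using (hasDerivAt_id t).const_sub a
  have h := ((((hasDerivAt_tanh (a - t)).comp t hsub).sub (hasDerivAt_tanh t)).add
    (((hasDerivAt_log_cosh t).sub ((hasDerivAt_log_cosh (a - t)).comp t hsub)).const_mul
      (2 * (cosh a / sinh a)))).div_const (sinh a ^ 2)
  refine h.congr_deriv ?_
  have hp := (cosh_pos t).ne'
  have hq := (cosh_pos (a - t)).ne'
  have hsinh : sinh a = (tanh t + tanh (a - t)) * (cosh t * cosh (a - t)) := by
    rw [tanh_add_tanh_sub]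
    field_simp
  have hcosh : cosh a = (1 + tanh t * tanh (a - t)) * (cosh t * cosh (a - t)) := by
    rw [one_add_tanh_mul_tanh_sub]
    field_simp
  have hTS : tanh t + tanh (a - t) ≠ 0 := left_ne_zero_of_mul (hsinh ▸ sinh_ne_zero.2 ha)
  rw [one_div_cosh_sq_eq_one_sub_tanh_sq, one_div_cosh_sq_eq_one_sub_tanh_sq, hsinh, hcosh]
  generalize cosh t = p, cosh (a - t) = q, tanh t = T, tanh (a - t) = S at hp hq hTS ⊢
  field_simp
  ring

theorem tendsto_log_cosh_sub_log_cosh_sub_atTop (a : ℝ) :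
    Tendsto (fun t => log (cosh t) - log (cosh (a - t))) atTop (𝓝 a) := by
  have hS := tendsto_tanh_atBot.comp (tendsto_const_sub_atTop_atBot a)
  have h : Tendsto (fun t => cosh a - sinh a * tanh (a - t)) atTop (𝓝 (exp a)) := by
    simpa [← cosh_add_sinh] using tendsto_const_nhds.sub (hS.const_mul (sinh a))
  simpa [log_cosh_sub_log_cosh_sub, Function.comp_def] using
    (continuousAt_log (exp_pos a).ne').tendsto.comp h

theorem tendsto_log_cosh_sub_log_cosh_sub_atBot (a : ℝ) :
    Tendsto (fun t => log (cosh t) - log (cosh (a - t))) atBot (𝓝 (-a)) := by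
  have hS := tendsto_tanh_atTop.comp (tendsto_const_sub_atBot_atTop a)
  have h : Tendsto (fun t => cosh a - sinh a * tanh (a - t)) atBot (𝓝 (exp (-a))) := by
    simpa [← cosh_sub_sinh] using tendsto_const_nhds.sub (hS.const_mul (sinh a))
  simpa [log_cosh_sub_log_cosh_sub, Function.comp_def] using
    (continuousAt_log (exp_pos (-a)).ne').tendsto.comp h

theorem tendsto_sechSqConvPrimitive_atTop (a : ℝ) :
    Tendsto (sechSqConvPrimitive a) atTop
      (𝓝 ((-1 - 1 + 2 * (cosh a / sinh a) * a) / sinh a ^ 2)) :=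
  ((((tendsto_tanh_atBot.comp (tendsto_const_sub_atTop_atBot a)).sub tendsto_tanh_atTop).add
    ((tendsto_log_cosh_sub_log_cosh_sub_atTop a).const_mul _)).div_const _)

theorem tendsto_sechSqConvPrimitive_atBot (a : ℝ) :
    Tendsto (sechSqConvPrimitive a) atBot
      (𝓝 ((1 - -1 + 2 * (cosh a / sinh a) * -a) / sinh a ^ 2)) :=
  ((((tendsto_tanh_atTop.comp (tendsto_const_sub_atBot_atTop a)).sub tendsto_tanh_atBot).add
    ((tendsto_log_cosh_sub_log_cosh_sub_atBot a).const_mul _)).div_const _)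

theorem integral_sech_sq_mul_sech_sq_sub {a : ℝ} (ha : a ≠ 0) :
    ∫ t, (1 / cosh t) ^ 2 * (1 / cosh (a - t)) ^ 2 =
      4 / sinh a ^ 2 * (a * (cosh a / sinh a) - 1) := by
  have hderiv := hasDerivAt_sechSqConvPrimitive ha
  have hbot := tendsto_sechSqConvPrimitive_atBot a
  have htop := tendsto_sechSqConvPrimitive_atTop a
  rw [integral_of_hasDerivAt_of_tendsto hderiv
    (integrable_of_hasDerivAt_of_nonneg hderiv (fun t => by positivity) hbot htop) hbot htop]
  ring

end Real

/-- The self-convolution `ρ₂ = ρ₁ * ρ₁` of `ρ₁(x) = (π/2) sech²(πx)` satisfies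
`ρ₂(x) = (π/sinh²(πx)) (πx coth(πx) - 1)` for `x ≠ 0`. -/
theorem rho_two_formula (x : ℝ) (hx : x ≠ 0) :
    ∫ u : ℝ, (Real.pi / 2 * (1 / Real.cosh (Real.pi * u)) ^ 2) *
        (Real.pi / 2 * (1 / Real.cosh (Real.pi * (x - u))) ^ 2)
      = Real.pi / Real.sinh (Real.pi * x) ^ 2 *
          (Real.pi * x * (Real.cosh (Real.pi * x) / Real.sinh (Real.pi * x)) - 1) := by
  have hπx : π * x ≠ 0 := mul_ne_zero pi_ne_zero hx
  have hscale := Measure.integral_comp_mul_left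
    (fun t => (1 / cosh t) ^ 2 * (1 / cosh (π * x - t)) ^ 2) π
  rw [integral_sech_sq_mul_sech_sq_sub hπx, abs_of_pos (inv_pos.2 pi_pos), smul_eq_mul] at hscale
  calc _ = (π / 2) ^ 2 * ∫ u, (1 / cosh (π * u)) ^ 2 * (1 / cosh (π * x - π * u)) ^ 2 := by
        rw [← integral_const_mul]
        congr with u
        rw [mul_sub]
        ring
    _ = _ := by
        rw [hscale]
        field_simp
        ring
end

section
/- Define h_ℓ(x) = Δ^ℓ[ C(x,ℓ) ψ(x) ], where C(x,ℓ) is the generalized binomial coefficient. Then h_{ℓ+1}(x) - h_ℓ(x) = 1/(ℓ+1) for all ℓ ≥ 1 and x > 0. -/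
/-!
Since `ψ(y + 1) = ψ(y) + 1/y`, the discrete Leibniz rule gives, for `y > 0`,
`Δ[C(y,ℓ+1) ψ(y)] = C(y,ℓ) ψ(y) + C(y+1,ℓ+1)/y`. By Pascal's rule and the absorption identity
`C(y,k+1) = y/(k+1) · C(y-1,k)`, the last term is the polynomial
`C(y-1,ℓ)/(ℓ+1) + C(y-1,ℓ-1)/ℓ`, on which `Δ^ℓ` takes the value `1/(ℓ+1)`.
-/

/-- The forward difference operator `Δf(x) = f(x+1) - f(x)`. -/
def deltaOp (f : ℝ → ℝ) : ℝ → ℝ := fun x => f (x + 1) - f x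

/-- The generalized binomial coefficient `C(y,ℓ) = y(y-1)⋯(y-ℓ+1)/ℓ!`. -/
noncomputable def genBinom (y : ℝ) (ℓ : ℕ) : ℝ :=
  (∏ i ∈ Finset.range ℓ, (y - i)) / (Nat.factorial ℓ)

/-- The digamma function `ψ = Γ'/Γ`. -/
noncomputable def digamma (x : ℝ) : ℝ := deriv (fun y => Real.log (Real.Gamma y)) x

open fwdDiff

lemma deltaOp_eq_fwdDiff : deltaOp = Δ_[1] := rfl

lemma fwdDiff_iter_apply_congr {F G : ℝ → ℝ} {x : ℝ} (h : ∀ y ≥ x, F y = G y) (n : ℕ) :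
    (Δ_[1])^[n] F x = (Δ_[1])^[n] G x := by
  simp only [fwdDiff_iter_eq_sum_shift]
  refine Finset.sum_congr rfl fun k _ => ?_
  rw [h]
  simp

lemma genBinom_succ_sub (y : ℝ) (k : ℕ) :
    genBinom (y + 1) (k + 1) - genBinom y (k + 1) = genBinom y k := by
  have hshift : ∏ i ∈ Finset.range (k + 1), (y + 1 - i) =
      (y + 1) * ∏ i ∈ Finset.range k, (y - i) := by
    rw [Finset.prod_range_succ', mul_comm]
    push_cast
    simp only [sub_zero, add_sub_add_right_eq_sub]
  rw [genBinom, genBinom, genBinom, hshift, Finset.prod_range_succ, Nat.factorial_succ]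
  push_cast
  field_simp
  ring

lemma genBinom_succ (y : ℝ) (k : ℕ) :
    genBinom y (k + 1) = y / (k + 1) * genBinom (y - 1) k := by
  have hshift : ∏ i ∈ Finset.range (k + 1), (y - i) =
      y * ∏ i ∈ Finset.range k, (y - 1 - i) := by
    rw [Finset.prod_range_succ', mul_comm]
    push_cast
    simp only [sub_zero, sub_add_eq_sub_sub_swap]
  rw [genBinom, genBinom, hshift, Nat.factorial_succ]
  push_cast
  field_simp

lemma fwdDiff_genBinom_sub (c : ℝ) (k : ℕ) :
    Δ_[1] (fun y => genBinom (y - c) (k + 1)) = fun y => genBinom (y - c) k := by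
  funext y
  rw [fwdDiff, ← sub_add_eq_add_sub, genBinom_succ_sub]

lemma fwdDiff_iter_genBinom_sub_self (c : ℝ) (k : ℕ) :
    (Δ_[1])^[k] (fun y => genBinom (y - c) k) = fun _ => 1 := by
  induction k with
  | zero => simp [genBinom]
  | succ k ih => rw [Function.iterate_succ_apply, fwdDiff_genBinom_sub, ih]

lemma fwdDiff_iter_succ_genBinom_sub (c : ℝ) (k : ℕ) :
    (Δ_[1])^[k + 1] (fun y => genBinom (y - c) k) = 0 := by
  rw [Function.iterate_succ_apply', fwdDiff_iter_genBinom_sub_self, fwdDiff_const]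
  rfl

lemma digamma_add_one {y : ℝ} (hy : 0 < y) : digamma (y + 1) = digamma y + y⁻¹ := by
  have hlogΓ : DifferentiableAt ℝ (fun z => Real.log (Real.Gamma z)) y :=
    (Real.differentiableAt_Gamma fun m => by linarith [(m.cast_nonneg : (0 : ℝ) ≤ m)]).log
      (Real.Gamma_pos_of_pos hy).ne'
  have hfe : (fun z => Real.log (Real.Gamma (z + 1))) =ᶠ[nhds y]
      fun z => Real.log z + Real.log (Real.Gamma z) := by
    filter_upwards [eventually_gt_nhds hy] with z hz
    rw [Real.Gamma_add_one hz.ne', Real.log_mul hz.ne' (Real.Gamma_pos_of_pos hz).ne']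
  have hderiv := hfe.deriv_eq
  rw [deriv_comp_add_const (f := fun z => Real.log (Real.Gamma z)),
    deriv_fun_add (Real.differentiableAt_log hy.ne') hlogΓ, Real.deriv_log] at hderiv
  rw [digamma, digamma, hderiv, add_comm]

lemma fwdDiff_genBinom_mul_digamma (ℓ : ℕ) {y : ℝ} (hy : 0 < y) :
    Δ_[1] (fun z => genBinom z (ℓ + 1) * digamma z) y =
      genBinom y ℓ * digamma y + genBinom (y + 1) (ℓ + 1) / y := by
  rw [fwdDiff, digamma_add_one hy, ← genBinom_succ_sub y ℓ]
  ring

lemma genBinom_add_one_div (k : ℕ) {y : ℝ} (hy : y ≠ 0) :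
    genBinom (y + 1) (k + 2) / y =
      genBinom (y - 1) (k + 1) / (k + 2) + genBinom (y - 1) k / (k + 1) := by
  rw [eq_add_of_sub_eq (genBinom_succ_sub y (k + 1)), genBinom_succ y (k + 1),
    genBinom_succ y k]
  push_cast
  field_simp
  ring

/-- With `h_ℓ(x) = Δ^ℓ[C(x,ℓ) ψ(x)]`, one has `h_{ℓ+1}(x) - h_ℓ(x) = 1/(ℓ+1)` for
`ℓ ≥ 1` and `x > 0`. -/
theorem h_succ_sub_h (ℓ : ℕ) (hℓ : 1 ≤ ℓ) (x : ℝ) (hx : 0 < x) :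
    (deltaOp^[ℓ + 1] fun y => genBinom y (ℓ + 1) * digamma y) x
      - (deltaOp^[ℓ] fun y => genBinom y ℓ * digamma y) x = 1 / (ℓ + 1) := by
  obtain ⟨k, rfl⟩ : ∃ k, ℓ = k + 1 := ⟨ℓ - 1, by omega⟩
  have hΔ : ∀ y ≥ x, Δ_[1] (fun z => genBinom z (k + 2) * digamma z) y =
      ((fun z => genBinom z (k + 1) * digamma z)
        + ((k : ℝ) + 2)⁻¹ • (fun z => genBinom (z - 1) (k + 1))
        + ((k : ℝ) + 1)⁻¹ • (fun z => genBinom (z - 1) k)) y := fun y hxy => by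
    have hy : 0 < y := by linarith
    rw [fwdDiff_genBinom_mul_digamma _ hy, genBinom_add_one_div _ hy.ne']
    simp only [Pi.add_apply, Pi.smul_apply, smul_eq_mul]
    ring
  rw [deltaOp_eq_fwdDiff, Function.iterate_succ_apply, fwdDiff_iter_apply_congr hΔ,
    fwdDiff_iter_add, fwdDiff_iter_add, fwdDiff_iter_const_smul, fwdDiff_iter_const_smul,
    fwdDiff_iter_genBinom_sub_self, fwdDiff_iter_succ_genBinom_sub]
  simp
  ring
end
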